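/- arXiv:2503.20907 — 2 statements merged into one kernel-verified Lean document; each statement's English description precedes it below -/
import Mathlib

section
/- Let a₁, a₂, a₃ > 0 and let r_{a_d}(x) = (1/a_d)·𝟙_{[0,a_d]}(x). Then the triple convolution satisfies (r_{a₁} ∗ r_{a₂} ∗ r_{a₃})(y) = (1/(2·a₁a₂a₃)) · Σ_{S ⊆ {1,2,3}} (−1)^{|S|} · (y − Σ_{d∈S} a_d)₊², where x₊ = max(x, 0). -/
open MeasureTheory Real Finset

/-- One-dimensional convolution. -/
noncomputable def conv (f g : ℝ → ℝ) : ℝ → ℝ :=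
  fun y => ∫ s : ℝ, f s * g (y - s)

/-- Normalized rectangle `r_a = (1/a)·𝟙_{[0,a]}`. -/
noncomputable def rect (a : ℝ) : ℝ → ℝ :=
  fun x => (1 / a) * Set.indicator (Set.Icc (0 : ℝ) a) 1 x

lemma maxsq_deriv (x : ℝ) : HasDerivAt (fun t : ℝ => (max t 0)^2) (2 * max x 0) x := by
  have key : ∀ t : ℝ, (max t 0)^2 = t * max t 0 := by
    intro t; rcases le_total t 0 with h | h
    · simp [max_eq_right h]
    · simp [max_eq_left h]; ring
  simp only [key]
  rcases lt_trichotomy x 0 with h | h | h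
  · have hev : (fun t : ℝ => t * max t 0) =ᶠ[nhds x] fun _ => 0 := by
      filter_upwards [Iio_mem_nhds h] with t (ht : t < 0)
      simp [max_eq_right ht.le]
    have h0 : HasDerivAt (fun _ : ℝ => (0:ℝ)) 0 x := hasDerivAt_const x 0
    have := h0.congr_of_eventuallyEq hev
    simpa [max_eq_right h.le] using this
  · subst h
    rw [hasDerivAt_iff_tendsto_slope]
    have hs : (fun t => slope (fun t : ℝ => t * max t 0) 0 t) = fun t : ℝ => max t 0 := by
      funext t
      rcases eq_or_ne t 0 with rfl | ht
      · simp [slope]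
      · rw [slope_def_field]; simp; field_simp
    rw [show (slope (fun t : ℝ => t * max t 0) 0) = fun t : ℝ => max t 0 from hs]
    have : Filter.Tendsto (fun t : ℝ => max t 0) (nhds 0) (nhds (max 0 0)) :=
      (continuous_id.max continuous_const).continuousAt.tendsto
    simpa using this.mono_left nhdsWithin_le_nhds
  · have hev : (fun t : ℝ => t * max t 0) =ᶠ[nhds x] fun t => t * t := by
      filter_upwards [Ioi_mem_nhds h] with t (ht : 0 < t)
      simp [max_eq_left ht.le]
    have h0 : HasDerivAt (fun t : ℝ => t * t) (2 * x) x := by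
      have h' : HasDerivAt (fun t : ℝ => t * t) (1 * x + x * 1) x := (hasDerivAt_id' x).mul (hasDerivAt_id' x)
      simpa [two_mul] using h'
    have := h0.congr_of_eventuallyEq hev
    simpa [max_eq_left h.le] using this

lemma ramp_integral (y c a : ℝ) :
    ∫ s in (0:ℝ)..a, max (y - s - c) 0 =
      (1/2) * ((max (y - c) 0)^2 - (max (y - a - c) 0)^2) := by
  have hderiv : ∀ s : ℝ, HasDerivAt (fun s : ℝ => -(1/2) * (max (y - s - c) 0)^2)
      (max (y - s - c) 0) s := by
    intro s
    have hin : HasDerivAt (fun s : ℝ => y - s - c) (-1) s := by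
      simpa using ((hasDerivAt_id s).const_sub y).sub_const c
    have := ((maxsq_deriv (y - s - c)).comp s hin).const_mul (-(1/2) : ℝ)
    have h' : HasDerivAt (fun s : ℝ => -(1/2) * (max (y - s - c) 0)^2)
        (-(1 / 2) * (2 * max (y - s - c) 0 * -1)) s := this
    convert h' using 1
    ring
  have hcont : Continuous fun s : ℝ => max (y - s - c) 0 := by fun_prop
  rw [intervalIntegral.integral_eq_sub_of_hasDerivAt (fun s _ => hderiv s)
    (hcont.intervalIntegrable 0 a)]
  ring

lemma conv_rect_eq (b : ℝ) (hb : 0 < b) (g : ℝ → ℝ) (y : ℝ) :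
    conv (rect b) g y = (1/b) * ∫ s in (0:ℝ)..b, g (y - s) := by
  unfold conv rect
  have h1 : (fun s : ℝ => (1 / b) * Set.indicator (Set.Icc (0 : ℝ) b) 1 s * g (y - s))
      = fun s : ℝ => Set.indicator (Set.Icc (0 : ℝ) b) (fun s => (1/b) * g (y - s)) s := by
    funext s
    by_cases hs : s ∈ Set.Icc (0:ℝ) b <;> simp [Set.indicator_of_mem, Set.indicator_of_notMem, hs]
  rw [h1, integral_indicator measurableSet_Icc, integral_Icc_eq_integral_Ioc,
    ← intervalIntegral.integral_of_le hb.le, intervalIntegral.integral_const_mul]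

set_option maxHeartbeats 1000000 in
lemma tent_key (b c t : ℝ) (hb : 0 < b) (hc : 0 < c) : max (min b t - max 0 (t - c)) 0
    = max t 0 - max (t-b) 0 - max (t-c) 0 + max (t-b-c) 0 := by
  rcases le_total t 0 with h1 | h1 <;> rcases le_total t b with h2 | h2 <;>
    rcases le_total t c with h3 | h3 <;> rcases le_total t (b+c) with h4 | h4 <;>
    simp [max_def, min_def] <;> split_ifs <;> linarith

lemma tent (b c : ℝ) (hb : 0 < b) (hc : 0 < c) (t : ℝ) :
    conv (rect b) (rect c) t =
      (1/(b*c)) * (max t 0 - max (t-b) 0 - max (t-c) 0 + max (t-b-c) 0) := by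
  rw [conv_rect_eq b hb]
  have h1 : (fun s : ℝ => rect c (t - s))
      = fun s : ℝ => (1/c) * Set.indicator (Set.Icc (t - c) t) 1 s := by
    funext s
    unfold rect
    congr 1
    simp only [Set.indicator_apply, Set.mem_Icc, Pi.one_apply]
    have hiff : (0 ≤ t - s ∧ t - s ≤ c) ↔ (t - c ≤ s ∧ s ≤ t) := by
      constructor <;> rintro ⟨u, v⟩ <;> exact ⟨by linarith, by linarith⟩
    rw [if_congr hiff rfl rfl]
  rw [h1, intervalIntegral.integral_const_mul]
  have h2 : ∫ s in (0:ℝ)..b, Set.indicator (Set.Icc (t - c) t) 1 s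
      = max (min b t - max 0 (t - c)) 0 := by
    rw [intervalIntegral.integral_of_le hb.le, ← integral_Icc_eq_integral_Ioc,
      ← integral_indicator measurableSet_Icc]
    rw [show (fun s : ℝ => Set.indicator (Set.Icc (0:ℝ) b)
        (fun s => Set.indicator (Set.Icc (t - c) t) 1 s) s)
        = Set.indicator (Set.Icc (0:ℝ) b ∩ Set.Icc (t-c) t) 1 from by
      rw [Set.indicator_indicator]]
    rw [integral_indicator (measurableSet_Icc.inter measurableSet_Icc)]
    rw [Set.Icc_inter_Icc]
    simp only [Pi.one_apply, integral_const, smul_eq_mul, mul_one,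
      measureReal_restrict_apply_univ, Real.volume_real_Icc]
  rw [h2, tent_key b c t hb hc]
  ring

/-- Triple convolution of normalized rectangles as an alternating sum of
truncated squares over all subsets of `{1,2,3}`. -/
theorem conv_rect_three (a : Fin 3 → ℝ) (ha : ∀ d, 0 < a d) (y : ℝ) :
    conv (rect (a 0)) (conv (rect (a 1)) (rect (a 2))) y =
      (1 / (2 * (a 0 * a 1 * a 2))) *
        ∑ S ∈ (Finset.univ : Finset (Fin 3)).powerset,
          (-1 : ℝ) ^ S.card * (max (y - ∑ d ∈ S, a d) 0) ^ 2 := by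
  have h0 := ha 0
  have h1 := ha 1
  have h2 := ha 2
  rw [conv_rect_eq (a 0) h0]
  have hi0 : IntervalIntegrable (fun s : ℝ => max (y - s) 0) volume 0 (a 0) :=
    (by fun_prop : Continuous fun s : ℝ => max (y - s) 0).intervalIntegrable 0 (a 0)
  have hi1 : IntervalIntegrable (fun s : ℝ => max (y - s - a 1) 0) volume 0 (a 0) :=
    (by fun_prop : Continuous fun s : ℝ => max (y - s - a 1) 0).intervalIntegrable 0 (a 0)
  have hi2 : IntervalIntegrable (fun s : ℝ => max (y - s - a 2) 0) volume 0 (a 0) :=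
    (by fun_prop : Continuous fun s : ℝ => max (y - s - a 2) 0).intervalIntegrable 0 (a 0)
  have hi12 : IntervalIntegrable (fun s : ℝ => max (y - s - a 1 - a 2) 0) volume 0 (a 0) :=
    (by fun_prop : Continuous fun s : ℝ => max (y - s - a 1 - a 2) 0).intervalIntegrable 0 (a 0)
  have hint : ∫ s in (0:ℝ)..(a 0), conv (rect (a 1)) (rect (a 2)) (y - s)
      = (1/(a 1 * a 2)) * ((∫ s in (0:ℝ)..(a 0), max (y - s) 0)
          - (∫ s in (0:ℝ)..(a 0), max (y - s - a 1) 0)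
          - (∫ s in (0:ℝ)..(a 0), max (y - s - a 2) 0)
          + (∫ s in (0:ℝ)..(a 0), max (y - s - a 1 - a 2) 0)) := by
    have hcongr : ∀ s ∈ Set.uIcc (0:ℝ) (a 0),
        conv (rect (a 1)) (rect (a 2)) (y - s)
          = (1/(a 1 * a 2)) * (max (y - s) 0 - max (y - s - a 1) 0
              - max (y - s - a 2) 0 + max (y - s - a 1 - a 2) 0) := by
      intro s _
      rw [tent (a 1) (a 2) h1 h2 (y - s)]
    rw [intervalIntegral.integral_congr hcongr, intervalIntegral.integral_const_mul]
    congr 1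
    rw [intervalIntegral.integral_add ((hi0.sub hi1).sub hi2) hi12,
      intervalIntegral.integral_sub (hi0.sub hi1) hi2,
      intervalIntegral.integral_sub hi0 hi1]
  have r0 : ∫ s in (0:ℝ)..(a 0), max (y - s) 0
      = (1/2) * ((max y 0)^2 - (max (y - a 0) 0)^2) := by
    rw [show (∫ s in (0:ℝ)..(a 0), max (y - s) 0)
        = ∫ s in (0:ℝ)..(a 0), max (y - s - 0) 0 from
      intervalIntegral.integral_congr (fun s _ => by norm_num)]
    simpa using ramp_integral y 0 (a 0)
  have r12 : ∫ s in (0:ℝ)..(a 0), max (y - s - a 1 - a 2) 0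
      = (1/2) * ((max (y - (a 1 + a 2)) 0)^2 - (max (y - (a 0 + a 1 + a 2)) 0)^2) := by
    have e : ∀ s : ℝ, y - s - a 1 - a 2 = y - s - (a 1 + a 2) := fun s => by ring
    simp only [e]
    rw [ramp_integral y (a 1 + a 2) (a 0)]
    rw [show y - a 0 - (a 1 + a 2) = y - (a 0 + a 1 + a 2) from by ring]
  rw [hint, r0, r12, ramp_integral y (a 1) (a 0), ramp_integral y (a 2) (a 0)]
  have hsum : ∑ S ∈ (Finset.univ : Finset (Fin 3)).powerset,
      (-1 : ℝ) ^ S.card * (max (y - ∑ d ∈ S, a d) 0) ^ 2 =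
      (max y 0)^2 - (max (y - a 0) 0)^2 - (max (y - a 1) 0)^2 - (max (y - a 2) 0)^2
        + (max (y - (a 0 + a 1)) 0)^2 + (max (y - (a 0 + a 2)) 0)^2
        + (max (y - (a 1 + a 2)) 0)^2 - (max (y - (a 0 + a 1 + a 2)) 0)^2 := by
    have hps : (Finset.univ : Finset (Fin 3)).powerset =
        {∅, {0}, {1}, {2}, {0,1}, {0,2}, {1,2}, {0,1,2}} := by decide
    rw [hps]
    simp (config := { decide := true }) [Finset.sum_insert, Finset.card_insert_of_notMem]
    ring_nf
  rw [hsum, show y - a 0 - a 1 = y - (a 0 + a 1) from by ring,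
    show y - a 0 - a 2 = y - (a 0 + a 2) from by ring]
  field_simp
  ring
end

section
/- For θ ∈ (0, π/4), set α₁ = sin θ, α₃ = cos θ, α₅ = sin θ + cos θ, and define φ_θ^box(y) = (−1/(α₁α₃α₅)) · Σ over the six knots α ∈ {0, sin θ, 2sin θ + cos θ, cos θ, sin θ + 2cos θ, 2(sin θ + cos θ)} with alternating signs (−1)^n of (y − α_n)₊², indexing the knots in the listed order n = 1,…,6. Then φ_θ^box(y) = 0 for all y ≤ 0 and all y ≥ 2(sin θ + cos θ); and for 0 ≤ y < sin θ, φ_θ^box(y) = y²/(α₁α₃α₅). -/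
open Real Finset

/-- Knot vector `α = (0, sin θ, 2sin θ + cos θ, cos θ, sin θ + 2cos θ,
2(sin θ + cos θ))` of the projected 3-directional box-spline. -/
noncomputable def boxKnots (θ : ℝ) : Fin 6 → ℝ :=
  ![0, Real.sin θ, 2 * Real.sin θ + Real.cos θ, Real.cos θ,
    Real.sin θ + 2 * Real.cos θ, 2 * (Real.sin θ + Real.cos θ)]

/-- X-ray projection of the 3-directional box-spline as an alternating sum of
truncated squares, with `α₁ = sin θ`, `α₃ = cos θ`, `α₅ = sin θ + cos θ`. -/
noncomputable def boxProj (θ y : ℝ) : ℝ :=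
  (-1 / (Real.sin θ * Real.cos θ * (Real.sin θ + Real.cos θ))) *
    ∑ n : Fin 6, (-1 : ℝ) ^ ((n : ℕ) + 1) * (max (y - boxKnots θ n) 0) ^ 2

lemma boxProj_eq (θ y : ℝ) : boxProj θ y =
    (-1 / (Real.sin θ * Real.cos θ * (Real.sin θ + Real.cos θ))) *
    (-(max (y - 0) 0) ^ 2 + (max (y - Real.sin θ) 0) ^ 2
      - (max (y - (2 * Real.sin θ + Real.cos θ)) 0) ^ 2
      + (max (y - Real.cos θ) 0) ^ 2
      - (max (y - (Real.sin θ + 2 * Real.cos θ)) 0) ^ 2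
      + (max (y - 2 * (Real.sin θ + Real.cos θ)) 0) ^ 2) := by
  unfold boxProj
  congr 1
  simp [boxKnots, Fin.sum_univ_succ]
  ring

/-- For `θ ∈ (0, π/4)`: the projected box-spline vanishes for `y ≤ 0` and for
`y ≥ 2(sin θ + cos θ)`, and equals `y²/(α₁α₃α₅)` on `[0, sin θ)`. -/
theorem boxProj_piecewise (θ : ℝ) (hθ : θ ∈ Set.Ioo 0 (Real.pi / 4)) :
    (∀ y : ℝ, y ≤ 0 → boxProj θ y = 0) ∧
    (∀ y : ℝ, 2 * (Real.sin θ + Real.cos θ) ≤ y → boxProj θ y = 0) ∧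
    (∀ y : ℝ, 0 ≤ y → y < Real.sin θ →
      boxProj θ y =
        y ^ 2 / (Real.sin θ * Real.cos θ * (Real.sin θ + Real.cos θ))) := by
  obtain ⟨hθ0, hθ4⟩ := hθ
  have hπ := Real.pi_pos
  have hs : 0 < Real.sin θ := Real.sin_pos_of_pos_of_lt_pi hθ0 (by linarith)
  have hc : 0 < Real.cos θ := Real.cos_pos_of_mem_Ioo ⟨by linarith, by linarith⟩
  have hsc : Real.sin θ < Real.cos θ := by
    rw [← Real.sin_pi_div_two_sub]
    apply Real.sin_lt_sin_of_lt_of_le_pi_div_two (by linarith) (by linarith) (by linarith)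
  refine ⟨?_, ?_, ?_⟩
  · intro y hy
    rw [boxProj_eq,
      max_eq_right (by linarith), max_eq_right (by linarith), max_eq_right (by linarith),
      max_eq_right (by linarith), max_eq_right (by linarith), max_eq_right (by linarith)]
    ring
  · intro y hy
    rw [boxProj_eq,
      max_eq_left (by linarith), max_eq_left (by linarith), max_eq_left (by linarith),
      max_eq_left (by linarith), max_eq_left (by linarith), max_eq_left (by linarith)]
    ring
  · intro y hy0 hy1
    have hne : Real.sin θ * Real.cos θ * (Real.sin θ + Real.cos θ) ≠ 0 := by positivity
    rw [boxProj_eq,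
      max_eq_left (by linarith), max_eq_right (by linarith), max_eq_right (by linarith),
      max_eq_right (by linarith), max_eq_right (by linarith), max_eq_right (by linarith)]
    field_simp
    ring
end
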